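/- For every integer r ≥ 0 there exists a finite solvable group G of odd order with derived length exactly 2r + 1 and Ω(|G|) = (4·7^r − 1)/3, where Ω(|G|) is the number of prime factors of |G| counted with multiplicity. (Such a group is A₃ wr H_m, where H_m is the r-fold iterated wreath product of the group H₇ ≤ S₇ of order 21 and A₃ is cyclic of order 3.) -/

import Mathlib

/-!
`H₇` (the affine maps `x ↦ 2 ^ e * x + b` of `𝔽₇`) is metabelian, and for every group `K` of
derived length `d ≥ 1` the wreath product `K ≀ H₇` has derived length `d + 2`. The upper bound
holds because `H₇'' = 1` puts `(K ≀ H₇)''` into the base `K⁷`. For the lower bound, double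
commutators `⁅⁅f, g⁆, s⁆` with `f` supported at one point and `s ∈ H₇'` already reach every
value of `K` at that point, so the `k`-th derived subgroup of `K` embeds coordinatewise into the
`(k + 2)`-nd one of `K ≀ H₇`. Starting from `A₃ ≅ C₃` and iterating, `|G|` is replaced by
`21 · |G|⁷`, which stays odd and turns `Ω = c` into `7c + 2`.
-/

/-- `Omega n` is the number of prime factors of `n` counted with multiplicity,
usually denoted `Ω(n)`.  For a finite solvable group `G`, `Omega (Nat.card G)`
is the composition length of `G`. -/
def Omega (n : ℕ) : ℕ := n.primeFactorsList.length

def DerivedLengthEq (G : Type*) [Group G] (d : ℕ) : Prop :=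
  derivedSeries G d = ⊥ ∧ ∀ k < d, derivedSeries G k ≠ ⊥

open Subgroup
open scoped commutatorElement

namespace SemidirectProduct

variable {N G : Type*} [Group N] [Group G] {φ : G →* MulAut N}

instance [Finite N] [Finite G] : Finite (N ⋊[φ] G) :=
  Finite.of_equiv _ equivProd.symm

theorem commutatorElement_inl_inr (n : N) (g : G) :
    ⁅(inl n : N ⋊[φ] G), (inr g : N ⋊[φ] G)⁆ = inl (n * (φ g n)⁻¹) := by
  rw [commutatorElement_def, map_mul, map_inv inl, inl_aut, map_inv inr]
  group

end SemidirectProduct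

abbrev WreathProduct (K H X : Type*) [Group K] [Group H] [MulAction H X] : Type _ :=
  (X → K) ⋊[mulAutArrow] H

namespace WreathProduct

open SemidirectProduct

variable {K H X : Type*} [Group K] [Group H] [MulAction H X]

theorem card [Finite X] :
    Nat.card (WreathProduct K H X) = Nat.card K ^ Nat.card X * Nat.card H := by
  rw [SemidirectProduct.card, Nat.card_fun]

theorem derivedSeries_le_map_inl_pi {m : ℕ} (hH : derivedSeries H m = ⊥) (k : ℕ) :
    derivedSeries (WreathProduct K H X) (m + k) ≤
      (pi Set.univ fun _ => derivedSeries K k).map inl := by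
  induction k with
  | zero =>
    rw [derivedSeries_zero, pi_top, ← MonoidHom.range_eq_map, range_inl_eq_ker_rightHom,
      ← Subgroup.map_eq_bot_iff, ← le_bot_iff, ← hH]
    exact map_derivedSeries_le_derivedSeries _ m
  | succ k ih =>
    rw [← add_assoc, derivedSeries_succ, derivedSeries_succ]
    refine (commutator_mono ih ih).trans ?_
    rw [← map_commutator]
    exact map_mono (commutator_pi_pi_le _ _)

theorem derivedSeries_le_map_eval_comap_inl {m : ℕ} (x₀ : X)
    (hsurj : ∀ a : K, ∃ f : X → K, inl f ∈ derivedSeries (WreathProduct K H X) m ∧ f x₀ = a)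
    (k : ℕ) :
    derivedSeries K k ≤
      ((derivedSeries (WreathProduct K H X) (m + k)).comap inl).map (Pi.evalMonoidHom _ x₀) := by
  induction k with
  | zero =>
    intro a _
    obtain ⟨f, hf, rfl⟩ := hsurj a
    exact mem_map_of_mem _ hf
  | succ k ih =>
    rw [← add_assoc, derivedSeries_succ, derivedSeries_succ]
    refine (commutator_mono ih ih).trans ?_
    rw [← map_commutator]
    refine map_mono ?_
    rw [← map_le_iff_le_comap, map_commutator]
    exact commutator_mono (map_comap_le _ _) (map_comap_le _ _)

theorem derivedSeries_eq_bot_iff {m : ℕ} (hH : derivedSeries H m = ⊥) (x₀ : X)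
    (hsurj : ∀ a : K, ∃ f : X → K, inl f ∈ derivedSeries (WreathProduct K H X) m ∧ f x₀ = a)
    (k : ℕ) :
    derivedSeries (WreathProduct K H X) (m + k) = ⊥ ↔ derivedSeries K k = ⊥ := by
  constructor
  · intro h
    have := derivedSeries_le_map_eval_comap_inl x₀ hsurj k
    rwa [h, MonoidHom.comap_bot, (MonoidHom.ker_eq_bot_iff _).2 inl_injective, Subgroup.map_bot,
      le_bot_iff] at this
  · intro h
    have := derivedSeries_le_map_inl_pi (K := K) (X := X) hH k
    rwa [h, pi_bot, Subgroup.map_bot, le_bot_iff] at this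

theorem derivedLengthEq {m d : ℕ} (hH : derivedSeries H m = ⊥) (x₀ : X)
    (hsurj : ∀ a : K, ∃ f : X → K, inl f ∈ derivedSeries (WreathProduct K H X) m ∧ f x₀ = a)
    (hK : DerivedLengthEq K (d + 1)) :
    DerivedLengthEq (WreathProduct K H X) (m + (d + 1)) := by
  refine ⟨(derivedSeries_eq_bot_iff hH x₀ hsurj _).2 hK.1, fun k hk hbot => ?_⟩
  refine hK.2 d d.lt_succ_self ((derivedSeries_eq_bot_iff hH x₀ hsurj d).1 ?_)
  exact le_bot_iff.1 (hbot ▸ derivedSeries_antitone _ (by omega : k ≤ m + d))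

theorem mulAutArrow_apply (g : H) (f : X → K) (x : X) : mulAutArrow g f x = f (g⁻¹ • x) :=
  rfl

theorem exists_inl_mem_derivedSeries_two_apply_eq [DecidableEq X] {x₀ : X} {g s : H}
    (hs : s ∈ derivedSeries H 1) (hg : g⁻¹ • x₀ ≠ x₀) (hs₀ : s⁻¹ • x₀ ≠ x₀)
    (hgs : g⁻¹ • s⁻¹ • x₀ ≠ x₀) (a : K) :
    ∃ f : X → K, inl f ∈ derivedSeries (WreathProduct K H X) 2 ∧ f x₀ = a := by
  set F : X → K := Pi.mulSingle x₀ a * (mulAutArrow g (Pi.mulSingle x₀ a))⁻¹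
  refine ⟨F * (mulAutArrow s F)⁻¹, ?_, ?_⟩
  · have hF : inl F ∈ derivedSeries (WreathProduct K H X) 1 := by
      rw [← commutatorElement_inl_inr, derivedSeries_succ]
      exact commutator_mem_commutator (mem_top _) (mem_top _)
    have hs' : inr s ∈ derivedSeries (WreathProduct K H X) 1 :=
      map_derivedSeries_le_derivedSeries inr 1 (mem_map_of_mem inr hs)
    rw [← commutatorElement_inl_inr, derivedSeries_succ]
    exact commutator_mem_commutator hF hs'
  · simp only [F, Pi.mul_apply, Pi.inv_apply, mulAutArrow_apply, Pi.mulSingle_apply, hg, hs₀, hgs,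
      if_true, if_false, inv_one, mul_one]

end WreathProduct

/-- `⟨b, e⟩` is the affine map `x ↦ 2 ^ e * x + b` of `ZMod 7`; these maps form the subgroup
`H₇ ≤ S₇` of order 21. -/
@[ext]
structure H7 where
  b : ZMod 7
  e : ZMod 3
deriving DecidableEq, Fintype

namespace H7

def pow2 (e : ZMod 3) : ZMod 7 := 2 ^ e.val

theorem pow2_add : ∀ e f : ZMod 3, pow2 (e + f) = pow2 e * pow2 f := by decide

instance : Mul H7 := ⟨fun x y => ⟨x.b + pow2 x.e * y.b, x.e + y.e⟩⟩
instance : One H7 := ⟨⟨0, 0⟩⟩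
instance : Inv H7 := ⟨fun x => ⟨-(pow2 (-x.e) * x.b), -x.e⟩⟩

instance : Group H7 :=
  Group.ofLeftAxioms
    (fun x y z => H7.ext (by
        change x.b + pow2 x.e * y.b + pow2 (x.e + y.e) * z.b =
          x.b + pow2 x.e * (y.b + pow2 y.e * z.b)
        rw [pow2_add]; ring)
      (add_assoc _ _ _))
    (fun x => H7.ext (by change 0 + 1 * x.b = x.b; ring) (zero_add _))
    (fun x => H7.ext (by change -(pow2 (-x.e) * x.b) + pow2 (-x.e) * x.b = 0; ring)
      (neg_add_cancel _))

instance : MulAction H7 (ZMod 7) where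
  smul h x := pow2 h.e * x + h.b
  one_smul x := by change 1 * x + 0 = x; ring
  mul_smul x y z := by
    change pow2 (x.e + y.e) * z + (x.b + pow2 x.e * y.b) = pow2 x.e * (pow2 y.e * z + y.b) + x.b
    rw [pow2_add]; ring

theorem card : Nat.card H7 = 21 := by
  rw [Nat.card_eq_fintype_card]; decide

def exponent : H7 →* Multiplicative (ZMod 3) where
  toFun x := Multiplicative.ofAdd x.e
  map_one' := rfl
  map_mul' _ _ := rfl

theorem derivedSeries_two : derivedSeries H7 2 = ⊥ := by
  rw [derivedSeries_succ, derivedSeries_one, eq_bot_iff, commutator_le]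
  intro x hx y hy
  have hx₀ : x.e = 0 := Abelianization.commutator_subset_ker exponent hx
  have hy₀ : y.e = 0 := Abelianization.commutator_subset_ker exponent hy
  rw [mem_bot, commutatorElement_eq_one_iff_mul_comm]
  refine H7.ext ?_ (add_comm _ _)
  change x.b + pow2 x.e * y.b = y.b + pow2 y.e * x.b
  rw [hx₀, hy₀, show pow2 0 = 1 from rfl]
  ring

theorem translation_mem_derivedSeries_one : (⟨1, 0⟩ : H7) ∈ derivedSeries H7 1 := by
  have : (⟨1, 0⟩ : H7) = ⁅(⟨0, 1⟩ : H7), ⟨1, 0⟩⁆ := by decide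
  rw [this, derivedSeries_one]
  exact commutator_mem_commutator (mem_top _) (mem_top _)

end H7

theorem derivedLengthEq_wreathProduct_H7 {K : Type*} [Group K] {d : ℕ}
    (hK : DerivedLengthEq K (d + 1)) :
    DerivedLengthEq (WreathProduct K H7 (ZMod 7)) (2 + (d + 1)) :=
  WreathProduct.derivedLengthEq H7.derivedSeries_two 0
    -- the translations by 3 and by 1 move 0 to 4, to 6, and jointly to 3
    (WreathProduct.exists_inl_mem_derivedSeries_two_apply_eq (g := ⟨3, 0⟩)
      H7.translation_mem_derivedSeries_one (by decide) (by decide) (by decide)) hK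

open ArithmeticFunction in
theorem Omega_pow_mul {n m : ℕ} (k : ℕ) (hn : n ≠ 0) (hm : m ≠ 0) :
    Omega (n ^ k * m) = k * Omega n + Omega m :=
  (cardFactors_mul (pow_ne_zero k hn) hm).trans (congrArg (· + Omega m) cardFactors_pow)

theorem Omega_twentyOne : Omega 21 = 2 := by
  rw [show 21 = 3 ^ 1 * 7 by rfl, Omega_pow_mul 1 three_ne_zero (by norm_num)]
  simp [Omega, Nat.primeFactorsList_prime Nat.prime_three,
    Nat.primeFactorsList_prime (by norm_num : Nat.Prime 7)]

theorem exists_wreath_tower (r : ℕ) :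
    ∃ (G : Type) (_ : Group G) (_ : Finite G), Odd (Nat.card G) ∧
      3 * Omega (Nat.card G) + 1 = 4 * 7 ^ r ∧ DerivedLengthEq G (2 * r + 1) := by
  induction r with
  | zero =>
    have hcard : Nat.card (Multiplicative (ZMod 3)) = 3 := by
      rw [Nat.card_eq_fintype_card, Fintype.card_multiplicative, ZMod.card]
    refine ⟨Multiplicative (ZMod 3), inferInstance, inferInstance, ?_, ?_, ?_, ?_⟩
    · rw [hcard]; decide
    · rw [hcard, Omega, Nat.primeFactorsList_prime Nat.prime_three]
      rfl
    · rw [derivedSeries_one]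
      exact (commutator_eq_bot_iff _).2 inferInstance
    · intro k hk
      rw [Nat.lt_one_iff.1 hk, derivedSeries_zero]
      exact top_ne_bot
  | succ r ih =>
    obtain ⟨G, _, _, hodd, hΩ, hd⟩ := ih
    have hcard : Nat.card (WreathProduct G H7 (ZMod 7)) = Nat.card G ^ 7 * 21 := by
      rw [WreathProduct.card, Nat.card_zmod, H7.card]
    have hG : Nat.card G ≠ 0 := Nat.card_ne_zero.2 ⟨inferInstance, inferInstance⟩
    refine ⟨WreathProduct G H7 (ZMod 7), inferInstance, inferInstance, ?_, ?_, ?_⟩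
    · rw [hcard]
      exact hodd.pow.mul (by decide)
    · rw [hcard, Omega_pow_mul 7 hG (by norm_num), Omega_twentyOne, pow_succ]
      linarith
    · rw [show 2 * (r + 1) + 1 = 2 + (2 * r + 1) by ring]
      exact derivedLengthEq_wreathProduct_H7 hd

/-- For every `r ≥ 0` there is a finite solvable group of odd order with derived length
exactly `2r + 1` and composition length `(4·7^r − 1)/3` (e.g. `A₃ wr H_m`, where `H_m`
is the `r`-fold iterated wreath product of the subgroup `H₇ ≤ S₇` of order `21` and `A₃`
is cyclic of order `3`). -/
theorem exists_odd_solvable_derived_length_two_mul_add_one (r : ℕ) :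
    ∃ (G : Type) (_ : Group G) (_ : Finite G), IsSolvable G ∧ Odd (Nat.card G) ∧
      DerivedLengthEq G (2 * r + 1) ∧ Omega (Nat.card G) = (4 * 7 ^ r - 1) / 3 := by
  obtain ⟨G, _, _, hodd, hΩ, hd⟩ := exists_wreath_tower r
  exact ⟨G, inferInstance, inferInstance, (Group.isSolvable_def G).2 ⟨_, hd.1⟩, hodd, hd, by omega⟩
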